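/- arXiv:2202.02351 — 6 statements merged into one kernel-verified Lean document; each statement's English description precedes it below -/
import Mathlib

section
/- (Proposition 1, one step) Assume Θ_k = {θ : H_θ θ ≤ h_θ} is nonempty, 𝕏_l = {z_l} ⊕ α_l 𝕏_0 with 𝕏_0 = co{x¹,…,x^q} = {x : H_x x ≤ 1}, control u(x) = K(x − x̄) + v, and [w̄]_j = max_{w∈𝕎}[H_x]_j w. Then A(θ)𝕏_l ⊕ B(θ)u(𝕏_l) ⊕ 𝕎 ⊆ {z_{l+1}} ⊕ α_{l+1}𝕏_0 for all θ ∈ Θ_k if and only if for each vertex j there exists Λ^j ≥ 0 with Λ^j H_θ = H_x D^j and Λ^j h_θ + H_x d^j + w̄ ≤ α_{l+1}1, where x^{(j)} = z_l + α_l x^j, u^{(j)} = K(x^{(j)} − x̄) + v, D^j = D(x^{(j)}, u^{(j)}), d^j = A_0 x^{(j)} + B_0 u^{(j)} − z_{l+1}. -/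
/-!
For fixed `θ` and `w` the map `x ↦ Hx (A(θ) x + B(θ) u(x) + w - z')` is affine, so the tube
inclusion only has to be checked at the vertices `z_l + α_l xʲ`, and the disturbance enters each
row only through its support value `w̄`. Since `A(θ) xʲ + B(θ) uʲ = A₀ xʲ + B₀ uʲ + Dʲ θ`, what is
left is, for each vertex and each row, a linear inequality in `θ` valid on the nonempty polyhedron
`Θ_k`; by the affine Farkas lemma this is equivalent to the existence of the row of multipliers
`Λʲ`. Farkas' lemma itself follows from separation from a closed convex cone: finitely generated
cones are closed, since conic Carathéodory writes them as finite unions of images of orthants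
under injective linear maps.
-/

open Matrix Set Pointwise

theorem PointedCone.mem_hull_range_iff_exists_fun {R ι E : Type*} [Semiring R] [PartialOrder R]
    [IsOrderedRing R] [Fintype ι] [AddCommMonoid E] [Module R E] {v : ι → E} {x : E} :
    x ∈ PointedCone.hull R (range v) ↔ ∃ μ : ι → R, 0 ≤ μ ∧ ∑ i, μ i • v i = x := by
  rw [PointedCone.hull, Submodule.mem_span_range_iff_exists_fun]
  constructor
  · rintro ⟨c, rfl⟩
    exact ⟨fun i => c i, fun i => (c i).2, by simp only [Nonneg.coe_smul]⟩
  · rintro ⟨μ, hμ, rfl⟩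
    exact ⟨fun i => ⟨μ i, hμ i⟩, by simp only [← Nonneg.coe_smul]⟩

section Cone

variable {ι E : Type*} [Fintype ι] [AddCommGroup E]

theorem exists_nonneg_coeff_eq_zero_of_not_linearIndependent {𝕜 : Type*} [Field 𝕜]
    [LinearOrder 𝕜] [IsStrictOrderedRing 𝕜] [Module 𝕜 E] {v : ι → E}
    (hv : ¬LinearIndependent 𝕜 v) {μ : ι → 𝕜} (hμ : 0 ≤ μ) :
    ∃ j, ∃ μ' : ι → 𝕜, 0 ≤ μ' ∧ μ' j = 0 ∧ ∑ i, μ' i • v i = ∑ i, μ i • v i := by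
  classical
  obtain ⟨g, hg, i₀, hi₀⟩ : ∃ g : ι → 𝕜, ∑ i, g i • v i = 0 ∧ ∃ i, 0 < g i := by
    obtain ⟨g, hg, i, hi⟩ := Fintype.not_linearIndependent_iff.1 hv
    rcases hi.lt_or_gt with hneg | hpos
    · exact ⟨-g, by simp [neg_smul, hg], i, neg_pos.2 hneg⟩
    · exact ⟨g, hg, i, hpos⟩
  -- move along the relation `g` until the first coefficient hits zero
  obtain ⟨j, hj, hmin⟩ := (Finset.univ.filter (0 < g ·)).exists_min_image (fun i => μ i / g i)
    ⟨i₀, by simpa using hi₀⟩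
  have hgj : 0 < g j := (Finset.mem_filter.1 hj).2
  set r := μ j / g j
  refine ⟨j, μ - r • g, fun i => ?_, by simp [r, div_mul_cancel₀ _ hgj.ne'], ?_⟩
  · rcases le_or_gt (g i) 0 with hgi | hgi
    · have : r * g i ≤ 0 := mul_nonpos_of_nonneg_of_nonpos (div_nonneg (hμ j) hgj.le) hgi
      simp only [Pi.zero_apply, Pi.sub_apply, Pi.smul_apply, smul_eq_mul]
      linarith [show 0 ≤ μ i from hμ i]
    · have := hmin i (by simpa using hgi)
      simp only [Pi.zero_apply, Pi.sub_apply, Pi.smul_apply, smul_eq_mul, sub_nonneg]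
      rwa [le_div_iff₀ hgi] at this
  · simp [sub_smul, Finset.sum_sub_distrib, mul_smul, ← Finset.smul_sum, hg]

variable [Module ℝ E] [TopologicalSpace E] [IsTopologicalAddGroup E] [ContinuousSMul ℝ E]
  [T2Space E]

theorem PointedCone.isClosed_hull_range (v : ι → E) :
    IsClosed (PointedCone.hull ℝ (range v) : Set E) := by
  induction hcard : Fintype.card ι using Nat.strong_induction_on generalizing ι with
  | _ n ih =>
  by_cases hv : LinearIndependent ℝ v
  · have hcone : (PointedCone.hull ℝ (range v) : Set E) =
        Fintype.linearCombination ℝ v '' Ici 0 := by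
      ext x
      simp [mem_hull_range_iff_exists_fun, Fintype.linearCombination_apply]
    rw [hcone]
    exact (LinearMap.isClosedEmbedding_of_injective (LinearMap.ker_eq_bot.2
      (linearIndependent_iff_injective_fintypeLinearCombination.1 hv))).isClosedMap _ isClosed_Ici
  · classical
    have hcone : (PointedCone.hull ℝ (range v) : Set E) =
        ⋃ j, (PointedCone.hull ℝ (range fun i : {i // i ≠ j} => v i.1) : Set E) := by
      refine Subset.antisymm ?_ (iUnion_subset fun j =>
        Submodule.span_mono (range_subset_iff.2 fun i => mem_range_self _))
      intro x hx
      obtain ⟨μ, hμ, rfl⟩ := mem_hull_range_iff_exists_fun.1 hx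
      obtain ⟨j, μ', hμ', hj, hsum⟩ := exists_nonneg_coeff_eq_zero_of_not_linearIndependent hv hμ
      refine mem_iUnion.2 ⟨j, mem_hull_range_iff_exists_fun.2 ⟨fun i => μ' i, fun i => hμ' i, ?_⟩⟩
      rw [← hsum, Fintype.sum_eq_add_sum_subtype_ne _ j, hj, zero_smul, zero_add]
    rw [hcone]
    exact isClosed_iUnion_of_finite fun j =>
      ih _ (hcard ▸ Fintype.card_subtype_lt (p := (· ≠ j)) (not_not.2 rfl)) _ rfl

end Cone

namespace Matrix

variable {κ ι ρ : Type*} [Fintype ι]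

theorem dotProduct_le_mul_of_mulVec_le_smul {H : Matrix κ ι ℝ} {h : κ → ℝ} {θ₀ : ι → ℝ}
    (hθ₀ : H *ᵥ θ₀ ≤ h) {c : ι → ℝ} {b : ℝ} (hle : ∀ θ, H *ᵥ θ ≤ h → c ⬝ᵥ θ ≤ b)
    {y : ι → ℝ} {t : ℝ} (ht : 0 ≤ t) (hy : H *ᵥ y ≤ t • h) : c ⬝ᵥ y ≤ b * t := by
  rcases ht.lt_or_eq with ht | rfl
  · have := hle (t⁻¹ • y) <| by
      rw [mulVec_smul, ← inv_smul_smul₀ ht.ne' h]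
      exact smul_le_smul_of_nonneg_left hy (inv_nonneg.2 ht.le)
    rw [dotProduct_smul, smul_eq_mul, inv_mul_le_iff₀ ht] at this
    linarith
  · -- `y` is a recession direction: `θ₀ + s • y` stays feasible for every `s ≥ 0`
    rw [zero_smul] at hy
    by_contra! hcy
    rw [mul_zero] at hcy
    have hb : c ⬝ᵥ θ₀ ≤ b := hle θ₀ hθ₀
    set s := (b - c ⬝ᵥ θ₀ + 1) / (c ⬝ᵥ y)
    have hs : 0 ≤ s := div_nonneg (by linarith) hcy.le
    have := hle (θ₀ + s • y) <| by
      rw [mulVec_add, mulVec_smul]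
      simpa using add_le_add hθ₀ (smul_nonpos_of_nonneg_of_nonpos hs hy)
    rw [dotProduct_add, dotProduct_smul, smul_eq_mul, div_mul_cancel₀ _ hcy.ne'] at this
    linarith

variable [Fintype κ]

theorem exists_nonneg_vecMul_eq_iff (M : Matrix κ ι ℝ) (c : ι → ℝ) :
    (∃ μ : κ → ℝ, 0 ≤ μ ∧ μ ᵥ* M = c) ↔ ∀ y, 0 ≤ M *ᵥ y → 0 ≤ c ⬝ᵥ y := by
  constructor
  · rintro ⟨μ, hμ, rfl⟩ y hy
    rw [← dotProduct_mulVec]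
    exact dotProduct_nonneg_of_nonneg hμ hy
  · intro h
    by_contra hc
    classical
    let C : ProperCone ℝ (ι → ℝ) :=
      ⟨PointedCone.hull ℝ (range M), PointedCone.isClosed_hull_range M⟩
    have hcC : c ∉ C := fun hcC => hc <| by
      simpa [vecMul_eq_sum] using PointedCone.mem_hull_range_iff_exists_fun.1 hcC
    obtain ⟨f, hfC, hfc⟩ := C.hyperplane_separation_point hcC
    set y : ι → ℝ := fun i => f fun j => if i = j then 1 else 0
    have hf : ∀ x, f x = x ⬝ᵥ y := fun x => by
      simpa [dotProduct] using LinearMap.pi_apply_eq_sum_univ (f : (ι → ℝ) →ₗ[ℝ] ℝ) x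
    have hMy : 0 ≤ M *ᵥ y := fun i => by
      rw [Pi.zero_apply, mulVec, ← hf]
      exact hfC _ (PointedCone.subset_hull (mem_range_self i))
    linarith [h y hMy, hf c]

theorem exists_nonneg_vecMul_eq_dotProduct_le_iff (H : Matrix κ ι ℝ) (h : κ → ℝ)
    (hne : ∃ θ, H *ᵥ θ ≤ h) (c : ι → ℝ) (b : ℝ) :
    (∃ μ : κ → ℝ, 0 ≤ μ ∧ μ ᵥ* H = c ∧ μ ⬝ᵥ h ≤ b) ↔ ∀ θ, H *ᵥ θ ≤ h → c ⬝ᵥ θ ≤ b := by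
  constructor
  · rintro ⟨μ, hμ, rfl, hb⟩ θ hθ
    calc μ ᵥ* H ⬝ᵥ θ = μ ⬝ᵥ H *ᵥ θ := (dotProduct_mulVec _ _ _).symm
      _ ≤ μ ⬝ᵥ h := dotProduct_le_dotProduct_of_nonneg_left hθ hμ
      _ ≤ b := hb
  · intro hle
    obtain ⟨θ₀, hθ₀⟩ := hne
    -- homogenize: the rows `(-H | h)` and `(0 | 1)` encode `H y ≤ t • h` and `0 ≤ t`
    set M := fromBlocks (-H) (replicateCol Unit h) 0 (1 : Matrix Unit Unit ℝ)
    have hM : ∀ y, 0 ≤ M *ᵥ y → 0 ≤ Sum.elim (-c) (fun _ => b) ⬝ᵥ y := by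
      intro y hy
      obtain ⟨u, t, rfl⟩ : ∃ u t, y = Sum.elim u fun _ => t :=
        ⟨y ∘ Sum.inl, y (Sum.inr ()), by ext (i | ⟨⟩) <;> rfl⟩
      have ht : 0 ≤ t := by simpa [M, fromBlocks_mulVec] using hy (Sum.inr ())
      have hu : H *ᵥ u ≤ t • h := fun i => by
        simpa [M, fromBlocks_mulVec, mulVec, dotProduct, replicateCol, mul_comm]
          using hy (Sum.inl i)
      have := dotProduct_le_mul_of_mulVec_le_smul hθ₀ hle ht hu
      rw [sumElim_dotProduct_sumElim, neg_dotProduct, dotProduct_pUnit]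
      linarith
    obtain ⟨μ, hμ, hμM⟩ := (exists_nonneg_vecMul_eq_iff M _).2 hM
    rw [vecMul_fromBlocks] at hμM
    have hH := congrArg (· ∘ Sum.inl) hμM
    have hh := congrFun hμM (Sum.inr ())
    simp only [Sum.elim_comp_inl, vecMul_zero, add_zero, Sum.elim_inr, Pi.add_apply,
      vecMul_one] at hH hh
    refine ⟨μ ∘ Sum.inl, fun i => hμ _, by simpa [vecMul_neg] using hH, ?_⟩
    have hh : μ ∘ Sum.inl ⬝ᵥ h + μ (Sum.inr ()) = b := hh
    linarith [show 0 ≤ μ (Sum.inr ()) from hμ _]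

theorem exists_nonneg_mul_eq_mulVec_le_iff (H : Matrix κ ι ℝ) (h : κ → ℝ)
    (hne : ∃ θ, H *ᵥ θ ≤ h) (C : Matrix ρ ι ℝ) (b : ρ → ℝ) :
    (∃ Λ : Matrix ρ κ ℝ, (∀ r i, 0 ≤ Λ r i) ∧ Λ * H = C ∧ Λ *ᵥ h ≤ b) ↔
      ∀ θ, H *ᵥ θ ≤ h → C *ᵥ θ ≤ b := by
  calc _ ↔ ∀ r, ∃ μ : κ → ℝ, 0 ≤ μ ∧ μ ᵥ* H = C r ∧ μ ⬝ᵥ h ≤ b r := by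
        refine ⟨fun ⟨Λ, hΛ, hΛH, hΛh⟩ r =>
          ⟨Λ r, hΛ r, by rw [← mul_apply_eq_vecMul, hΛH], hΛh r⟩, fun hrow => ?_⟩
        choose Λ hΛ hΛH hΛh using hrow
        exact ⟨of Λ, hΛ, funext fun r => (mul_apply_eq_vecMul (of Λ) H r).trans (hΛH r), hΛh⟩
    _ ↔ ∀ r, ∀ θ, H *ᵥ θ ≤ h → C r ⬝ᵥ θ ≤ b r :=
        forall_congr' fun r => exists_nonneg_vecMul_eq_dotProduct_le_iff H h hne _ _
    _ ↔ _ := ⟨fun hrow θ hθ r => hrow r θ hθ, fun hθ r θ hθr => hθ θ hθr r⟩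

end Matrix

theorem forall_mem_add_le_iff_of_isGreatest {α ι β : Type*} [Add β] [Preorder β] [AddLeftMono β]
    {W : Set α} {φ : α → ι → β} {wbar : ι → β}
    (hwbar : ∀ r, IsGreatest ((fun w => φ w r) '' W) (wbar r)) (a c : ι → β) :
    (∀ w ∈ W, a + φ w ≤ c) ↔ a + wbar ≤ c := by
  refine ⟨fun h r => ?_, fun h w hw r => ?_⟩
  · obtain ⟨w, hw, hwr⟩ := (hwbar r).1
    simpa [← hwr] using h w hw r
  · calc a r + φ w r ≤ a r + wbar r := by gcongr; exact (hwbar r).2 ⟨w, hw, rfl⟩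
      _ ≤ c r := h r

theorem forall_mem_singleton_add_smul_convexHull_iff {𝕜 E ι : Type*} [Field 𝕜] [LinearOrder 𝕜]
    [IsStrictOrderedRing 𝕜] [AddCommGroup E] [Module 𝕜 E] {S : Set E} (hS : Convex 𝕜 S)
    (z : E) (a : 𝕜) (xv : ι → E) :
    (∀ x ∈ {z} + a • convexHull 𝕜 (range xv), x ∈ S) ↔ ∀ j, z + a • xv j ∈ S := by
  refine ⟨fun h j => h _ (add_mem_add rfl (smul_mem_smul_set (subset_convexHull 𝕜 _ ⟨j, rfl⟩))),
    ?_⟩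
  rintro h _ ⟨_, hz, _, ⟨y, hy, rfl⟩, rfl⟩
  rw [mem_singleton_iff.1 hz]
  refine convexHull_min ?_ ((hS.translate_preimage_right z).smul_preimage a) hy
  exact range_subset_iff.2 h

theorem convex_setOf_mulVec_feedback_le {𝕜 n m ρ : Type*} [Field 𝕜] [LinearOrder 𝕜]
    [IsStrictOrderedRing 𝕜] [Fintype n] [Fintype m] (Hx : Matrix ρ n 𝕜) (A : Matrix n n 𝕜)
    (B : Matrix n m 𝕜) (K : Matrix m n 𝕜) (xb z' : n → 𝕜) (v : m → 𝕜) (e c : ρ → 𝕜) :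
    Convex 𝕜 {x | Hx *ᵥ (A *ᵥ x + B *ᵥ (K *ᵥ (x - xb) + v) - z') + e ≤ c} := by
  let f : (n → 𝕜) →ᵃ[𝕜] (ρ → 𝕜) :=
    { toFun := fun x => Hx *ᵥ (A *ᵥ x + B *ᵥ (K *ᵥ (x - xb) + v) - z') + e
      linear := (Hx * (A + B * K)).mulVecLin
      map_vadd' := fun x y => by
        simp only [vadd_eq_add, mulVecLin_apply, add_mulVec, ← mulVec_mulVec,
          mulVec_add, mulVec_sub]
        abel }
  exact (convex_Iic c).affine_preimage f

theorem affine_mulVec_add_mulVec_eq {n m p : Type*} [Fintype n] [Fintype m] [Fintype p]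
    {R : Type*} [CommRing R] (A0 : Matrix n n R) (Amat : p → Matrix n n R) (B0 : Matrix n m R)
    (Bmat : p → Matrix n m R) {x : n → R} {u : m → R} {D : Matrix n p R}
    (hD : ∀ r c, D r c = (Amat c *ᵥ x + Bmat c *ᵥ u) r) (θ : p → R) :
    (A0 + ∑ i, θ i • Amat i) *ᵥ x + (B0 + ∑ i, θ i • Bmat i) *ᵥ u =
      A0 *ᵥ x + B0 *ᵥ u + D *ᵥ θ := by
  have hDθ : D *ᵥ θ = ∑ i, θ i • (Amat i *ᵥ x + Bmat i *ᵥ u) := by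
    rw [mulVec_eq_sum]
    exact Finset.sum_congr rfl fun i _ => by
      rw [op_smul_eq_smul]; exact congrArg _ (funext (hD · i))
  simp only [hDθ, add_mulVec, sum_mulVec, smul_mulVec, smul_add, Finset.sum_add_distrib]
  abel

theorem stmt7_general {n m p nθ nx q : ℕ}
    (A0 : Matrix (Fin n) (Fin n) ℝ) (Amat : Fin p → Matrix (Fin n) (Fin n) ℝ)
    (B0 : Matrix (Fin n) (Fin m) ℝ) (Bmat : Fin p → Matrix (Fin n) (Fin m) ℝ)
    (A : (Fin p → ℝ) → Matrix (Fin n) (Fin n) ℝ)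
    (B : (Fin p → ℝ) → Matrix (Fin n) (Fin m) ℝ)
    (hA : ∀ θ, A θ = A0 + ∑ i, θ i • Amat i)
    (hB : ∀ θ, B θ = B0 + ∑ i, θ i • Bmat i)
    (Dfun : (Fin n → ℝ) → (Fin m → ℝ) → Matrix (Fin n) (Fin p) ℝ)
    (hDfun : ∀ x u r c, Dfun x u r c = ((Amat c).mulVec x + (Bmat c).mulVec u) r)
    (Hθ : Matrix (Fin nθ) (Fin p) ℝ) (hθ : Fin nθ → ℝ)
    (hΘne : {θ : Fin p → ℝ | Hθ.mulVec θ ≤ hθ}.Nonempty)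
    (Hx : Matrix (Fin nx) (Fin n) ℝ) (xv : Fin q → Fin n → ℝ)
    (W : Set (Fin n → ℝ)) (wbar : Fin nx → ℝ)
    (hwbar : ∀ j, IsGreatest ((fun w => Hx.mulVec w j) '' W) (wbar j))
    (K : Matrix (Fin m) (Fin n) ℝ) (xb : Fin n → ℝ) (v : Fin m → ℝ)
    (z z' : Fin n → ℝ) (αl αl' : ℝ) :
    (∀ θ : Fin p → ℝ, Hθ.mulVec θ ≤ hθ →
        ∀ x ∈ ({z} + αl • convexHull ℝ (Set.range xv)), ∀ w ∈ W,
          (A θ).mulVec x + (B θ).mulVec (K.mulVec (x - xb) + v) + w ∈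
            {y | Hx.mulVec (y - z') ≤ αl' • (1 : Fin nx → ℝ)}) ↔
      (∀ j : Fin q, ∃ Λ : Matrix (Fin nx) (Fin nθ) ℝ,
        (∀ r c, 0 ≤ Λ r c) ∧
        Λ * Hθ =
          Hx * Dfun (z + αl • xv j) (K.mulVec (z + αl • xv j - xb) + v) ∧
        Λ.mulVec hθ +
            Hx.mulVec (A0.mulVec (z + αl • xv j) +
              B0.mulVec (K.mulVec (z + αl • xv j - xb) + v) - z') + wbar ≤
          αl' • (1 : Fin nx → ℝ)) := by
  have hdecomp : ∀ θ x u, A θ *ᵥ x + B θ *ᵥ u = A0 *ᵥ x + B0 *ᵥ u + Dfun x u *ᵥ θ :=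
    fun θ x u => by rw [hA, hB]; exact affine_mulVec_add_mulVec_eq A0 Amat B0 Bmat (hDfun x u) θ
  have hlinear : ∀ θ j, Hx *ᵥ (A θ *ᵥ (z + αl • xv j) +
        B θ *ᵥ (K *ᵥ (z + αl • xv j - xb) + v) - z') + wbar ≤ αl' • 1 ↔
      (Hx * Dfun (z + αl • xv j) (K *ᵥ (z + αl • xv j - xb) + v)) *ᵥ θ ≤ αl' • 1 -
        (Hx *ᵥ (A0 *ᵥ (z + αl • xv j) + B0 *ᵥ (K *ᵥ (z + αl • xv j - xb) + v) - z') + wbar) :=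
    fun θ j => by
      rw [hdecomp, add_sub_right_comm, mulVec_add, mulVec_mulVec, add_right_comm,
        le_sub_iff_add_le']
  calc _ ↔ ∀ θ : Fin p → ℝ, Hθ *ᵥ θ ≤ hθ → ∀ j, Hx *ᵥ (A θ *ᵥ (z + αl • xv j) +
          B θ *ᵥ (K *ᵥ (z + αl • xv j - xb) + v) - z') + wbar ≤ αl' • 1 := by
        refine forall₂_congr fun θ _ => Iff.trans ?_ (forall_mem_singleton_add_smul_convexHull_iff
          (convex_setOf_mulVec_feedback_le Hx (A θ) (B θ) K xb z' v wbar (αl' • 1)) z αl xv)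
        refine forall₂_congr fun x _ => ?_
        simp only [mem_ofPred_eq, add_sub_right_comm _ _ z', mulVec_add]
        exact forall_mem_add_le_iff_of_isGreatest hwbar _ _
    _ ↔ _ :=
        ⟨fun h j θ hθ => (hlinear θ j).1 (h θ hθ j), fun h θ hθ j => (hlinear θ j).2 (h j θ hθ)⟩
    _ ↔ _ := forall_congr' fun j => by
        rw [← Matrix.exists_nonneg_mul_eq_mulVec_le_iff Hθ hθ hΘne]
        simp only [le_sub_iff_add_le, add_assoc]

/-- Proposition 1, one step: the robust one-step tube inclusion holds
for all `θ ∈ Θ_k` iff for each vertex there exist nonnegative multipliers `Λʲ`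
satisfying the linear certificate. -/
theorem stmt7 {n m p nθ nx q : ℕ}
    (A0 : Matrix (Fin n) (Fin n) ℝ) (Amat : Fin p → Matrix (Fin n) (Fin n) ℝ)
    (B0 : Matrix (Fin n) (Fin m) ℝ) (Bmat : Fin p → Matrix (Fin n) (Fin m) ℝ)
    (A : (Fin p → ℝ) → Matrix (Fin n) (Fin n) ℝ)
    (B : (Fin p → ℝ) → Matrix (Fin n) (Fin m) ℝ)
    (hA : ∀ θ, A θ = A0 + ∑ i, θ i • Amat i)
    (hB : ∀ θ, B θ = B0 + ∑ i, θ i • Bmat i)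
    (Dfun : (Fin n → ℝ) → (Fin m → ℝ) → Matrix (Fin n) (Fin p) ℝ)
    (hDfun : ∀ x u r c, Dfun x u r c = ((Amat c).mulVec x + (Bmat c).mulVec u) r)
    (Hθ : Matrix (Fin nθ) (Fin p) ℝ) (hθ : Fin nθ → ℝ)
    (hΘne : {θ : Fin p → ℝ | Hθ.mulVec θ ≤ hθ}.Nonempty)
    (Hx : Matrix (Fin nx) (Fin n) ℝ) (xv : Fin q → Fin n → ℝ)
    (hrep : convexHull ℝ (Set.range xv) = {x | Hx.mulVec x ≤ 1})
    (W : Set (Fin n → ℝ)) (wbar : Fin nx → ℝ)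
    (hwbar : ∀ j, IsGreatest ((fun w => Hx.mulVec w j) '' W) (wbar j))
    (K : Matrix (Fin m) (Fin n) ℝ) (xb : Fin n → ℝ) (v : Fin m → ℝ)
    (z z' : Fin n → ℝ) (αl αl' : ℝ) (hαl : 0 ≤ αl) (hαl' : 0 ≤ αl') :
    (∀ θ : Fin p → ℝ, Hθ.mulVec θ ≤ hθ →
        ∀ x ∈ ({z} + αl • convexHull ℝ (Set.range xv)), ∀ w ∈ W,
          (A θ).mulVec x + (B θ).mulVec (K.mulVec (x - xb) + v) + w ∈
            {y | Hx.mulVec (y - z') ≤ αl' • (1 : Fin nx → ℝ)}) ↔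
      (∀ j : Fin q, ∃ Λ : Matrix (Fin nx) (Fin nθ) ℝ,
        (∀ r c, 0 ≤ Λ r c) ∧
        Λ * Hθ =
          Hx * Dfun (z + αl • xv j) (K.mulVec (z + αl • xv j - xb) + v) ∧
        Λ.mulVec hθ +
            Hx.mulVec (A0.mulVec (z + αl • xv j) +
              B0.mulVec (K.mulVec (z + αl • xv j - xb) + v) - z') + wbar ≤
          αl' • (1 : Fin nx → ℝ)) :=
  stmt7_general A0 Amat B0 Bmat A B hA hB Dfun hDfun Hθ hθ hΘne Hx xv W wbar hwbar K xb v z z' αl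
    αl'
end

section
/- (Proposition 2: feasibility of terminal conditions) Suppose 𝕏_0 = {x : H_x x ≤ 1} is λ-contractive: H_x(A(θ) + B(θ)K)x ≤ λ_c 1 for all θ ∈ Θ and x ∈ 𝕏_0, with λ_c ≤ 1 − w̄·f̄̄ where f̄̄ = max_i [f̄]_i, [f̄]_i = max_{x∈𝕏_0}[F+GK]_i x, and w̄ = max over w ∈ 𝕎 and rows of H_x of [H_x]_j w. Then the choice x̃ = 0, ũ = 0, α̃ = 1/f̄̄ yields a set x̃ ⊕ α̃𝕏_0 that is robustly invariant under the control law π(x) = K(x − x̃) + ũ for all θ ∈ Θ and w ∈ 𝕎, and satisfies the constraints F x + G π(x) ≤ 1 on this set. -/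
/-!
Scaling by `f̄̄` maps `(1/f̄̄)𝕏₀` onto `𝕏₀`, so every bound on `𝕏₀` transfers to the terminal set
after division by `f̄̄`. Contractivity then bounds the closed-loop part of `H_x x⁺` by `λ_c / f̄̄`,
and the disturbance adds at most `w̄`; `λ_c ≤ 1 − w̄ f̄̄` is exactly `λ_c / f̄̄ + w̄ ≤ 1 / f̄̄`.
On `𝕏₀` each constraint row is at most `[f̄]_i ≤ f̄̄`, hence at most `1` on the scaled set.
-/

open Matrix Set

section ScaledPolyhedron

variable {𝕜 ι κ : Type*} [Field 𝕜] [LinearOrder 𝕜] [IsStrictOrderedRing 𝕜] [Fintype ι]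

theorem Matrix.mulVec_smul_le_smul_iff {c : 𝕜} (hc : 0 < c) (H : Matrix κ ι 𝕜)
    (x : ι → 𝕜) (b : κ → 𝕜) : H *ᵥ (c • x) ≤ c • b ↔ H *ᵥ x ≤ b := by
  rw [mulVec_smul, smul_le_smul_iff_of_pos_left hc]

theorem Matrix.mulVec_smul_le_one_iff {c : 𝕜} (hc : 0 < c) (H : Matrix κ ι 𝕜) (x : ι → 𝕜) :
    H *ᵥ (c • x) ≤ 1 ↔ H *ᵥ x ≤ c⁻¹ • 1 := by
  rw [← mulVec_smul_le_smul_iff hc H x, smul_inv_smul₀ hc.ne']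

theorem Matrix.mulVec_add_le_inv_smul_one {H : Matrix κ ι 𝕜} {v w : ι → 𝕜} {c lc wb : 𝕜}
    (hc : 0 < c) (hv : H *ᵥ (c • v) ≤ lc • 1) (hw : ∀ j, (H *ᵥ w) j ≤ wb)
    (hlc : lc ≤ 1 - wb * c) : H *ᵥ (v + w) ≤ c⁻¹ • 1 := by
  intro j
  have hvj : c * (H *ᵥ v) j ≤ lc := by simpa [mulVec_smul] using hv j
  have hsum : c * ((H *ᵥ v) j + (H *ᵥ w) j) ≤ 1 := by
    rw [mul_add]
    linarith [mul_le_mul_of_nonneg_left (hw j) hc.le]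
  rw [mulVec_add, Pi.add_apply, Pi.smul_apply, Pi.one_apply, smul_eq_mul,
    le_inv_mul_iff₀ hc]
  exact hsum

end ScaledPolyhedron

theorem Matrix.mulVec_add_mulVec_mulVec {m n l : Type*} [Fintype n] [Fintype l]
    {R : Type*} [NonUnitalSemiring R] (A : Matrix m n R) (B : Matrix m l R) (K : Matrix l n R)
    (x : n → R) : A *ᵥ x + B *ᵥ (K *ᵥ x) = (A + B * K) *ᵥ x := by
  rw [add_mulVec, mulVec_mulVec]

/-- Proposition 2: under λ-contractivity of `𝕏₀` with
`λ_c ≤ 1 − w̄·f̄̄`, the choice `x̃ = 0`, `ũ = 0`, `α̃ = 1/f̄̄` gives a robustly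
invariant terminal set on which the constraints hold. -/
theorem stmt9 {n m p nc nx : ℕ}
    (A : (Fin p → ℝ) → Matrix (Fin n) (Fin n) ℝ)
    (B : (Fin p → ℝ) → Matrix (Fin n) (Fin m) ℝ)
    (K : Matrix (Fin m) (Fin n) ℝ)
    (F : Matrix (Fin nc) (Fin n) ℝ) (G : Matrix (Fin nc) (Fin m) ℝ)
    (Hx : Matrix (Fin nx) (Fin n) ℝ)
    (Θ : Set (Fin p → ℝ)) (W : Set (Fin n → ℝ))
    (X0 : Set (Fin n → ℝ)) (hX0 : X0 = {x | Hx.mulVec x ≤ 1})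
    (lc : ℝ)
    (hcontr : ∀ θ ∈ Θ, ∀ x ∈ X0,
      Hx.mulVec ((A θ + B θ * K).mulVec x) ≤ lc • (1 : Fin nx → ℝ))
    (fbar : Fin nc → ℝ)
    (hfbar : ∀ i, IsGreatest ((fun x => ((F + G * K).mulVec x) i) '' X0) (fbar i))
    (fbb : ℝ) (hfbb : IsGreatest (Set.range fbar) fbb) (hfbbpos : 0 < fbb)
    (wbars : ℝ)
    (hwbars : IsGreatest {r | ∃ w ∈ W, ∃ j, Hx.mulVec w j = r} wbars)
    (hlc : lc ≤ 1 - wbars * fbb) :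
    ∀ x ∈ {y | Hx.mulVec y ≤ (1 / fbb) • (1 : Fin nx → ℝ)}, ∀ θ ∈ Θ, ∀ w ∈ W,
      ((A θ).mulVec x + (B θ).mulVec (K.mulVec x) + w ∈
          {y | Hx.mulVec y ≤ (1 / fbb) • (1 : Fin nx → ℝ)}) ∧
        F.mulVec x + G.mulVec (K.mulVec x) ≤ 1 := by
  intro x hx θ hθ w hw
  rw [one_div] at hx
  have hscaled : fbb • x ∈ X0 := hX0 ▸ (mulVec_smul_le_one_iff hfbbpos Hx x).2 hx
  refine ⟨?_, ?_⟩
  · rw [one_div, mulVec_add_mulVec_mulVec]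
    refine mulVec_add_le_inv_smul_one hfbbpos ?_ (fun j => hwbars.2 ⟨w, hw, j, rfl⟩) hlc
    simpa only [mulVec_smul] using hcontr θ hθ _ hscaled
  · rw [mulVec_add_mulVec_mulVec, ← mulVec_smul_le_smul_iff hfbbpos]
    intro i
    simpa using ((hfbar i).2 ⟨_, hscaled, rfl⟩).trans (hfbb.2 ⟨i, rfl⟩)
end

section
/- (λ-contractivity plus bounded translation gives invariance) Let 𝕏_0 = {x : H_x x ≤ 1} satisfy H_x A_cl(θ) x ≤ λ_c 1 for all x ∈ 𝕏_0, θ ∈ Θ, with λ_c ∈ [0,1). If x̃, ũ, α̃ ≥ 0 satisfy w̄ + H_x(A(θ)x̃ + B(θ)ũ − x̃) ≤ α̃(1 − λ_c)1 for all θ ∈ Θ, then the set {x̃} ⊕ α̃𝕏_0 is robustly invariant under u = K(x − x̃) + ũ: for all x ∈ {x̃} ⊕ α̃𝕏_0, θ ∈ Θ, w ∈ 𝕎, the successor A(θ)x + B(θ)(K(x−x̃)+ũ) + w lies in {x̃} ⊕ α̃𝕏_0. -/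
open Matrix Set

/-!
Write `x = x̃ + e`. The successor minus `x̃` splits as `A_cl e + (A x̃ + B ũ - x̃) + w`.
The contractivity condition is homogeneous, so `H_x e ≤ α̃` gives `H_x A_cl e ≤ α̃ λ_c`
(for `α̃ = 0` by scaling `e` arbitrarily), and the translation condition bounds the
other two terms by `α̃ (1 - λ_c)`.
-/

section PolytopeScaling

variable {R E ι κ : Type*} [Field R] [LinearOrder R] [IsStrictOrderedRing R]
  [AddCommGroup E] [Module R E]

theorem le_smul_of_forall_le_one_of_pos {H : E →ₗ[R] ι → R} {L : E →ₗ[R] κ → R} {b : κ → R}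
    (hHL : ∀ x, H x ≤ 1 → L x ≤ b) {α : R} (hα : 0 < α) {x : E} (hx : H x ≤ α • 1) :
    L x ≤ α • b := by
  have hscaled : L (α⁻¹ • x) ≤ b := hHL _ fun i => by
    simpa [inv_mul_le_iff₀ hα] using hx i
  intro j
  simpa [inv_mul_le_iff₀ hα] using hscaled j

-- Directions with `H x ≤ 0` stay in `{H ≤ 1}` at every scale, so `L` cannot be positive on them.
theorem le_zero_of_forall_le_one {H : E →ₗ[R] ι → R} {L : E →ₗ[R] κ → R}
    {b : κ → R} (hHL : ∀ x, H x ≤ 1 → L x ≤ b) {x : E} (hx : H x ≤ 0) : L x ≤ 0 := by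
  intro j
  by_contra! hpos
  set s := (|b j| + 1) / L x j
  have hs : 0 < s := div_pos (by positivity) hpos
  have hscaled : L (s • x) ≤ b := hHL _ fun i => by
    simpa using (mul_nonpos_of_nonneg_of_nonpos hs.le (hx i)).trans zero_le_one
  have hj : s * L x j ≤ b j := by simpa using hscaled j
  rw [div_mul_cancel₀ _ hpos.ne'] at hj
  linarith [le_abs_self (b j)]

theorem le_smul_of_forall_le_one {H : E →ₗ[R] ι → R} {L : E →ₗ[R] κ → R} {b : κ → R}
    (hHL : ∀ x, H x ≤ 1 → L x ≤ b) {α : R} (hα : 0 ≤ α) {x : E} (hx : H x ≤ α • 1) :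
    L x ≤ α • b := by
  rcases hα.eq_or_lt with rfl | hα
  · simpa using le_zero_of_forall_le_one hHL (by simpa using hx)
  · exact le_smul_of_forall_le_one_of_pos hHL hα hx

end PolytopeScaling

theorem stmt10_general {n m p nx : ℕ}
    (A : (Fin p → ℝ) → Matrix (Fin n) (Fin n) ℝ)
    (B : (Fin p → ℝ) → Matrix (Fin n) (Fin m) ℝ)
    (K : Matrix (Fin m) (Fin n) ℝ)
    (Hx : Matrix (Fin nx) (Fin n) ℝ)
    (Θ : Set (Fin p → ℝ)) (W : Set (Fin n → ℝ))
    (X0 : Set (Fin n → ℝ)) (hX0 : X0 = {x | Hx.mulVec x ≤ 1})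
    (lc : ℝ)
    (hcontr : ∀ θ ∈ Θ, ∀ x ∈ X0,
      Hx.mulVec ((A θ + B θ * K).mulVec x) ≤ lc • (1 : Fin nx → ℝ))
    (wbar : Fin nx → ℝ)
    (hwbar : ∀ j, IsGreatest ((fun w => Hx.mulVec w j) '' W) (wbar j))
    (xt : Fin n → ℝ) (ut : Fin m → ℝ) (αt : ℝ) (hαt : 0 ≤ αt)
    (hcond : ∀ θ ∈ Θ,
      wbar + Hx.mulVec ((A θ).mulVec xt + (B θ).mulVec ut - xt) ≤
        (αt * (1 - lc)) • (1 : Fin nx → ℝ)) :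
    ∀ x, Hx.mulVec (x - xt) ≤ αt • (1 : Fin nx → ℝ) → ∀ θ ∈ Θ, ∀ w ∈ W,
      Hx.mulVec ((A θ).mulVec x + (B θ).mulVec (K.mulVec (x - xt) + ut) + w - xt) ≤
        αt • (1 : Fin nx → ℝ) := by
  subst hX0
  intro x hx θ hθ w hw j
  have hsplit : (A θ).mulVec x + (B θ).mulVec (K.mulVec (x - xt) + ut) + w - xt
      = (A θ + B θ * K).mulVec (x - xt) + ((A θ).mulVec xt + (B θ).mulVec ut - xt) + w := by
    simp only [add_mulVec, mulVec_add, mulVec_sub, ← mulVec_mulVec]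
    abel
  have hclosed : (Hx *ᵥ ((A θ + B θ * K) *ᵥ (x - xt))) j ≤ αt * lc := by
    have h := le_smul_of_forall_le_one (H := Hx.mulVecLin)
      (L := Hx.mulVecLin ∘ₗ (A θ + B θ * K).mulVecLin) (hcontr θ hθ) hαt hx j
    simp only [Pi.smul_apply, smul_eq_mul, Pi.one_apply, mul_one] at h
    exact h
  have hwj : (Hx *ᵥ w) j ≤ wbar j := (hwbar j).2 ⟨w, hw, rfl⟩
  have hnominal := hcond θ hθ j
  simp only [Pi.add_apply, Pi.smul_apply, Pi.one_apply, smul_eq_mul, mul_one] at hnominal ⊢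
  rw [hsplit, mulVec_add, mulVec_add]
  simp only [Pi.add_apply]
  linarith

/-- λ-contractivity plus a bounded-translation condition gives
robust invariance of the translated scaled set. -/
theorem stmt10 {n m p nx : ℕ}
    (A : (Fin p → ℝ) → Matrix (Fin n) (Fin n) ℝ)
    (B : (Fin p → ℝ) → Matrix (Fin n) (Fin m) ℝ)
    (K : Matrix (Fin m) (Fin n) ℝ)
    (Hx : Matrix (Fin nx) (Fin n) ℝ)
    (Θ : Set (Fin p → ℝ)) (W : Set (Fin n → ℝ))
    (X0 : Set (Fin n → ℝ)) (hX0 : X0 = {x | Hx.mulVec x ≤ 1})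
    (lc : ℝ) (hlc0 : 0 ≤ lc) (hlc1 : lc < 1)
    (hcontr : ∀ θ ∈ Θ, ∀ x ∈ X0,
      Hx.mulVec ((A θ + B θ * K).mulVec x) ≤ lc • (1 : Fin nx → ℝ))
    (wbar : Fin nx → ℝ)
    (hwbar : ∀ j, IsGreatest ((fun w => Hx.mulVec w j) '' W) (wbar j))
    (xt : Fin n → ℝ) (ut : Fin m → ℝ) (αt : ℝ) (hαt : 0 ≤ αt)
    (hcond : ∀ θ ∈ Θ,
      wbar + Hx.mulVec ((A θ).mulVec xt + (B θ).mulVec ut - xt) ≤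
        (αt * (1 - lc)) • (1 : Fin nx → ℝ)) :
    ∀ x, Hx.mulVec (x - xt) ≤ αt • (1 : Fin nx → ℝ) → ∀ θ ∈ Θ, ∀ w ∈ W,
      Hx.mulVec ((A θ).mulVec x + (B θ).mulVec (K.mulVec (x - xt) + ut) + w - xt) ≤
        αt • (1 : Fin nx → ℝ) :=
  stmt10_general A B K Hx Θ W X0 hX0 lc hcontr wbar hwbar xt ut αt hαt hcond
end

section
/- (Recursive feasibility shifting lemma) Suppose (𝕏_0*,…,𝕏_N*) and inputs v_0*,…,v_{N−1}* satisfy: x_k ∈ 𝕏_0*, the one-step robust inclusion 𝕏_{l+1}* ⊇ A(θ)𝕏_l* ⊕ B(θ)(K(· − x̄_l*) + v_l*) ⊕ 𝕎 for all θ ∈ Θ_k, and the terminal set 𝕏^T* ⊇ 𝕏_N* is robustly invariant under π^T(x) = K(x − x̃*) + ũ*. If x_{k+1} = A(θ*)x_k + B(θ*)(K(x_k − x̄_0*) + v_0*) + w_k with θ* ∈ Θ_{k+1} ⊆ Θ_k and w_k ∈ 𝕎, then the shifted candidate 𝕏_{l} := 𝕏_{l+1}* (l = 0,…,N−1), 𝕏_N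 := 𝕏^T*, with inputs v_l := v_{l+1}* + K(x̄_l − x̄_{l+1}*) for l ≤ N−2 and v_{N−1} := ũ* + K(x̄_{N−1} − x̃*), satisfies x_{k+1} ∈ 𝕏_0 and the one-step robust inclusions for all θ ∈ Θ_{k+1}. -/
open Matrix Set

theorem Matrix.mulVec_sub_add_add_mulVec_sub {ι κ R : Type*} [Fintype κ]
    [NonUnitalNonAssocRing R] (K : Matrix ι κ R) (x a b : κ → R) (v : ι → R) :
    K *ᵥ (x - a) + (v + K *ᵥ (a - b)) = K *ᵥ (x - b) + v := by
  simp only [mulVec_sub]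
  abel

/-- recursive-feasibility shifting lemma. The shifted tube and
shifted inputs remain feasible at the next time step. -/
theorem stmt13 {n m p : ℕ}
    (A : (Fin p → ℝ) → Matrix (Fin n) (Fin n) ℝ)
    (B : (Fin p → ℝ) → Matrix (Fin n) (Fin m) ℝ)
    (K : Matrix (Fin m) (Fin n) ℝ)
    (Θk Θk1 : Set (Fin p → ℝ)) (hΘ : Θk1 ⊆ Θk)
    (W : Set (Fin n → ℝ))
    (N : ℕ) (hN : 1 ≤ N)
    (Xs : ℕ → Set (Fin n → ℝ)) (vs : ℕ → Fin m → ℝ) (xbs : ℕ → Fin n → ℝ)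
    (XT : Set (Fin n → ℝ)) (xt : Fin n → ℝ) (ut : Fin m → ℝ)
    (xk xk1 : Fin n → ℝ) (θs : Fin p → ℝ) (wk : Fin n → ℝ)
    (hx0 : xk ∈ Xs 0)
    (hstep : ∀ l < N, ∀ θ ∈ Θk, ∀ x ∈ Xs l, ∀ w ∈ W,
      (A θ).mulVec x + (B θ).mulVec (K.mulVec (x - xbs l) + vs l) + w ∈ Xs (l + 1))
    (hsub : Xs N ⊆ XT)
    (hinv : ∀ θ ∈ Θk, ∀ x ∈ XT, ∀ w ∈ W,
      (A θ).mulVec x + (B θ).mulVec (K.mulVec (x - xt) + ut) + w ∈ XT)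
    (hθs : θs ∈ Θk1) (hwk : wk ∈ W)
    (hdyn : xk1 =
      (A θs).mulVec xk + (B θs).mulVec (K.mulVec (xk - xbs 0) + vs 0) + wk)
    (xbn : ℕ → Fin n → ℝ)
    (Y : ℕ → Set (Fin n → ℝ))
    (hY : ∀ l, Y l = if l < N then Xs (l + 1) else XT)
    (vn : ℕ → Fin m → ℝ)
    (hvn : ∀ l, vn l =
      if l + 1 < N then vs (l + 1) + K.mulVec (xbn l - xbs (l + 1))
      else ut + K.mulVec (xbn l - xt)) :
    xk1 ∈ Y 0 ∧
      ∀ l < N, ∀ θ ∈ Θk1, ∀ x ∈ Y l, ∀ w ∈ W,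
        (A θ).mulVec x + (B θ).mulVec (K.mulVec (x - xbn l) + vn l) + w ∈
          Y (l + 1) := by
  have shifted_input : ∀ l x, K *ᵥ (x - xbn l) + vn l =
      if l + 1 < N then K *ᵥ (x - xbs (l + 1)) + vs (l + 1) else K *ᵥ (x - xt) + ut := by
    intro l x
    rw [hvn]
    split_ifs <;> exact mulVec_sub_add_add_mulVec_sub ..
  refine ⟨?_, fun l hl θ hθ x hx w hw => ?_⟩
  · rw [hY, if_pos (by omega), hdyn]
    exact hstep 0 (by omega) θs (hΘ hθs) xk hx0 wk hwk
  · rw [hY, if_pos hl] at hx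
    rw [shifted_input, hY]
    split_ifs with h
    · exact hstep (l + 1) h θ (hΘ hθ) x hx w hw
    · have hlN : l + 1 = N := by omega
      exact hinv θ (hΘ hθ) x (hsub (hlN ▸ hx)) w hw
end

section
/- (Proposition 3 / tube inclusion approximation) Suppose Λ^j_k satisfy Λ^j_k H_θ = H_x D(x^j, Kx^j) for each vertex x^j of 𝕏_0, and define Λ̲_k = min_j Λ^j_k (elementwise) and λ̄_k = max_j (Λ^j_k h_{θ_k} + H_x(A_0+B_0K)x^j) (elementwise). If Λ_{l} satisfies Λ_{l} + α_{l} Λ̲_k ≥ 0, Λ_{l} H_θ = H_x [E_1 … E_p] ⊗ e_{l}, and Λ_{l} h_{θ_k} + α_{l} λ̄_k + H_x E_0 e_{l} − H_x z_{l+1} − α_{l+1}1 ≤ −w̄, then Λ^j_{l} := Λ_{l} + α_{l} Λ^j_k satisfies, for every vertex j: Λ^j_{l} ≥ 0, Λ^j_{l} H_θ = H_x D^j_{l}, and Λ^j_{l} h_{θ_k} + H_x d^j_{l} − α_{l+1}1 ≤ −w̄. -/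
/-!
Everything in the certificate is affine in the vertex data: the tube centre is shifted by
`α_l xʲ` and the input by `α_l K xʲ`, so `D` and the closed-loop drift split into the part at
`(z_l, u_l)` plus `α_l` times the part at `(xʲ, K xʲ)`. Hence `Λʲ_l = Λ_l + α_l Λʲ_k` inherits the
equality constraint from those of `Λ_l` and `Λʲ_k`, while the two inequalities follow from the
vertex-independent bounds `Λ̲_k ≤ Λʲ_k` and `Λʲ_k h_θ + H_x (A₀ + B₀K) xʲ ≤ λ̄_k`, multiplied by
`α_l ≥ 0`.
-/

open Matrix Set

section Affine

variable {R ι κ π : Type*} [CommRing R] [Fintype ι]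

theorem dfun_add_smul [Fintype κ] {Amat : π → Matrix ι ι R} {Bmat : π → Matrix ι κ R}
    {Dfun : (ι → R) → (κ → R) → Matrix ι π R}
    (hDfun : ∀ x u r c, Dfun x u r c = (Amat c *ᵥ x + Bmat c *ᵥ u) r)
    (x y : ι → R) (u v : κ → R) (a : R) :
    Dfun (x + a • y) (u + a • v) = Dfun x u + a • Dfun y v := by
  ext r c
  simp only [hDfun, Matrix.add_apply, Matrix.smul_apply, mulVec_add, mulVec_smul, Pi.add_apply,
    Pi.smul_apply, smul_eq_mul]
  ring

theorem mulVec_add_smul_sub_add (K : Matrix κ ι R) (z x xb : ι → R) (v : κ → R) (a : R) :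
    K *ᵥ (z + a • x - xb) + v = (K *ᵥ (z - xb) + v) + a • K *ᵥ x := by
  rw [add_sub_right_comm, mulVec_add, mulVec_smul]
  abel

theorem mulVec_add_mulVec_add_smul [Fintype κ] (A : Matrix ι ι R) (B : Matrix ι κ R)
    (K : Matrix κ ι R) (z x : ι → R) (u : κ → R) (a : R) :
    A *ᵥ (z + a • x) + B *ᵥ (u + a • K *ᵥ x) = (A *ᵥ z + B *ᵥ u) + a • (A + B * K) *ᵥ x := by
  rw [mulVec_add, mulVec_add, mulVec_smul, mulVec_smul, add_mulVec, ← mulVec_mulVec]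
  module

end Affine

theorem stmt15_general {n m p nθ nx q : ℕ}
    (A0 : Matrix (Fin n) (Fin n) ℝ) (Amat : Fin p → Matrix (Fin n) (Fin n) ℝ)
    (B0 : Matrix (Fin n) (Fin m) ℝ) (Bmat : Fin p → Matrix (Fin n) (Fin m) ℝ)
    (K : Matrix (Fin m) (Fin n) ℝ)
    (Dfun : (Fin n → ℝ) → (Fin m → ℝ) → Matrix (Fin n) (Fin p) ℝ)
    (hDfun : ∀ x u r c, Dfun x u r c = ((Amat c).mulVec x + (Bmat c).mulVec u) r)
    (Hθ : Matrix (Fin nθ) (Fin p) ℝ) (hθk : Fin nθ → ℝ)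
    (Hx : Matrix (Fin nx) (Fin n) ℝ) (wbar : Fin nx → ℝ)
    (xv : Fin q → Fin n → ℝ)
    (Λjk : Fin q → Matrix (Fin nx) (Fin nθ) ℝ)
    (hΛjk : ∀ j, Λjk j * Hθ = Hx * Dfun (xv j) (K.mulVec (xv j)))
    (Λlow : Matrix (Fin nx) (Fin nθ) ℝ)
    (hΛlow : ∀ r c, IsLeast (Set.range fun j => Λjk j r c) (Λlow r c))
    (lbar : Fin nx → ℝ)
    (hlbar : ∀ r, IsGreatest
      (Set.range fun j =>
        ((Λjk j).mulVec hθk + Hx.mulVec ((A0 + B0 * K).mulVec (xv j))) r)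
      (lbar r))
    (zl zl1 xbl : Fin n → ℝ) (vl : Fin m → ℝ) (αl αl1 : ℝ)
    (hαl : 0 ≤ αl)
    (uz : Fin m → ℝ) (huz : uz = K.mulVec (zl - xbl) + vl)
    (Λl : Matrix (Fin nx) (Fin nθ) ℝ)
    (h1 : ∀ r c, 0 ≤ Λl r c + αl * Λlow r c)
    (h2 : Λl * Hθ = Hx * Dfun zl uz)
    (h3 : Λl.mulVec hθk + αl • lbar +
        Hx.mulVec (A0.mulVec zl + B0.mulVec uz) - Hx.mulVec zl1 -
        αl1 • (1 : Fin nx → ℝ) ≤ -wbar) :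
    ∀ j : Fin q,
      (∀ r c, 0 ≤ (Λl + αl • Λjk j) r c) ∧
      (Λl + αl • Λjk j) * Hθ =
        Hx * Dfun (zl + αl • xv j)
          (K.mulVec (zl + αl • xv j - xbl) + vl) ∧
      (Λl + αl • Λjk j).mulVec hθk +
          Hx.mulVec (A0.mulVec (zl + αl • xv j) +
            B0.mulVec (K.mulVec (zl + αl • xv j - xbl) + vl) - zl1) -
          αl1 • (1 : Fin nx → ℝ) ≤ -wbar := by
  intro j
  have hlow : ∀ r c, Λlow r c ≤ Λjk j r c := fun r c => (hΛlow r c).2 ⟨j, rfl⟩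
  have hup : Λjk j *ᵥ hθk + Hx *ᵥ ((A0 + B0 * K) *ᵥ xv j) ≤ lbar :=
    fun r => (hlbar r).2 ⟨j, rfl⟩
  rw [mulVec_add_smul_sub_add, ← huz, dfun_add_smul hDfun, mulVec_add_mulVec_add_smul]
  refine ⟨fun r c => ?_, ?_, ?_⟩
  · calc (0 : ℝ) ≤ Λl r c + αl * Λlow r c := h1 r c
      _ ≤ (Λl + αl • Λjk j) r c := by
          simp only [Matrix.add_apply, Matrix.smul_apply, smul_eq_mul]
          gcongr
          exact hlow r c
  · rw [Matrix.add_mul, smul_mul, h2, hΛjk, Matrix.mul_add, Matrix.mul_smul]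
  · calc _ = (Λl *ᵥ hθk + Hx *ᵥ (A0 *ᵥ zl + B0 *ᵥ uz) - Hx *ᵥ zl1 - αl1 • 1) +
            αl • (Λjk j *ᵥ hθk + Hx *ᵥ ((A0 + B0 * K) *ᵥ xv j)) := by
          simp only [add_mulVec, smul_mulVec, mulVec_add, mulVec_sub, mulVec_smul]
          module
      _ ≤ (Λl *ᵥ hθk + Hx *ᵥ (A0 *ᵥ zl + B0 *ᵥ uz) - Hx *ᵥ zl1 - αl1 • 1) + αl • lbar := by
          gcongr
      _ ≤ -wbar := by convert h3 using 1; abel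

/-- Proposition 3, tube inclusion approximation: the parameterized
multipliers `Λʲ_l = Λ_l + α_l Λʲ_k` satisfy the vertex-wise tube inclusion
certificates. -/
theorem stmt15 {n m p nθ nx q : ℕ}
    (A0 : Matrix (Fin n) (Fin n) ℝ) (Amat : Fin p → Matrix (Fin n) (Fin n) ℝ)
    (B0 : Matrix (Fin n) (Fin m) ℝ) (Bmat : Fin p → Matrix (Fin n) (Fin m) ℝ)
    (K : Matrix (Fin m) (Fin n) ℝ)
    (Dfun : (Fin n → ℝ) → (Fin m → ℝ) → Matrix (Fin n) (Fin p) ℝ)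
    (hDfun : ∀ x u r c, Dfun x u r c = ((Amat c).mulVec x + (Bmat c).mulVec u) r)
    (Hθ : Matrix (Fin nθ) (Fin p) ℝ) (hθk : Fin nθ → ℝ)
    (Hx : Matrix (Fin nx) (Fin n) ℝ) (wbar : Fin nx → ℝ)
    (xv : Fin q → Fin n → ℝ)
    (Λjk : Fin q → Matrix (Fin nx) (Fin nθ) ℝ)
    (hΛjk : ∀ j, Λjk j * Hθ = Hx * Dfun (xv j) (K.mulVec (xv j)))
    (Λlow : Matrix (Fin nx) (Fin nθ) ℝ)
    (hΛlow : ∀ r c, IsLeast (Set.range fun j => Λjk j r c) (Λlow r c))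
    (lbar : Fin nx → ℝ)
    (hlbar : ∀ r, IsGreatest
      (Set.range fun j =>
        ((Λjk j).mulVec hθk + Hx.mulVec ((A0 + B0 * K).mulVec (xv j))) r)
      (lbar r))
    (zl zl1 xbl : Fin n → ℝ) (vl : Fin m → ℝ) (αl αl1 : ℝ)
    (hαl : 0 ≤ αl) (hαl1 : 0 ≤ αl1)
    (uz : Fin m → ℝ) (huz : uz = K.mulVec (zl - xbl) + vl)
    (Λl : Matrix (Fin nx) (Fin nθ) ℝ)
    (h1 : ∀ r c, 0 ≤ Λl r c + αl * Λlow r c)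
    (h2 : Λl * Hθ = Hx * Dfun zl uz)
    (h3 : Λl.mulVec hθk + αl • lbar +
        Hx.mulVec (A0.mulVec zl + B0.mulVec uz) - Hx.mulVec zl1 -
        αl1 • (1 : Fin nx → ℝ) ≤ -wbar) :
    ∀ j : Fin q,
      (∀ r c, 0 ≤ (Λl + αl • Λjk j) r c) ∧
      (Λl + αl • Λjk j) * Hθ =
        Hx * Dfun (zl + αl • xv j)
          (K.mulVec (zl + αl • xv j - xbl) + vl) ∧
      (Λl + αl • Λjk j).mulVec hθk +
          Hx.mulVec (A0.mulVec (zl + αl • xv j) +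
            B0.mulVec (K.mulVec (zl + αl • xv j - xbl) + vl) - zl1) -
          αl1 • (1 : Fin nx → ℝ) ≤ -wbar :=
  stmt15_general A0 Amat B0 Bmat K Dfun hDfun Hθ hθk Hx wbar xv Λjk hΛjk Λlow hΛlow lbar hlbar zl
    zl1 xbl vl αl αl1 hαl uz huz Λl h1 h2 h3
end

section
/- (Contraction under closed loop with disturbance) If 𝕏_0 = {x : H_x x ≤ 1} satisfies H_x A_cl(θ)x ≤ λ_c 1 for all x ∈ 𝕏_0, θ ∈ Θ, then for any α ≥ 0, any x ∈ α𝕏_0, θ ∈ Θ, and w ∈ 𝕎, the successor A_cl(θ)x + w belongs to α'𝕏_0 with α' = λ_c α + w̄, where w̄ = max_j max_{w∈𝕎}[H_x]_j w. Consequently, iterating, the scaling α_t converges to the interval [0, w̄/(1−λ_c)] and α_t ≤ λ_c^t α_0 + w̄(1−λ_c^t)/(1−λ_c). -/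
/-!
The sets `α 𝕏₀` are the sublevel sets of the positively homogeneous map `x ↦ H_x x`, so the
contraction of `𝕏₀` into `λ_c 𝕏₀` transfers to every scaling by homogeneity; a disturbance
`w ∈ 𝕎` adds at most `w̄` to each row. The scalings then obey an affine recursion, which is
solved in closed form.
-/

open Matrix Set

lemma nonpos_of_forall_pos_mul_le {y c : ℝ} (h : ∀ t : ℝ, 0 < t → t * y ≤ c) : y ≤ 0 := by
  by_contra! hy
  have := h ((|c| + 1) / y) (by positivity)
  rw [div_mul_cancel₀ _ hy.ne'] at this
  linarith [le_abs_self c]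

lemma LinearMap.le_smul_one_of_le_smul_one {E ι κ : Type*} [AddCommGroup E] [Module ℝ E]
    (H : E →ₗ[ℝ] ι → ℝ) (G : E →ₗ[ℝ] κ → ℝ) {c : ℝ}
    (hHG : ∀ x, H x ≤ 1 → G x ≤ c • 1) {α : ℝ} (hα : 0 ≤ α) {x : E} (hx : H x ≤ α • 1) :
    G x ≤ (c * α) • 1 := by
  rcases hα.eq_or_lt with rfl | hα
  · -- `{H x ≤ 0}` is a cone: scale `x` up instead of down.
    have hscaled : ∀ t : ℝ, 0 < t → t • G x ≤ c • 1 := fun t ht => by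
      rw [← map_smul]
      refine hHG _ ?_
      rw [map_smul]
      calc t • H x ≤ t • (0 : ℝ) • (1 : ι → ℝ) := smul_le_smul_of_nonneg_left hx ht.le
        _ ≤ 1 := by simp [zero_le_one]
    intro j
    simpa using nonpos_of_forall_pos_mul_le fun t ht => by simpa using hscaled t ht j
  · have hunit : H (α⁻¹ • x) ≤ 1 := by
      rw [map_smul]
      calc α⁻¹ • H x ≤ α⁻¹ • α • (1 : ι → ℝ) := smul_le_smul_of_nonneg_left hx (by positivity)
        _ = 1 := by rw [inv_smul_smul₀ hα.ne']
    calc G x = α • α⁻¹ • G x := (smul_inv_smul₀ hα.ne' _).symm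
      _ ≤ α • c • (1 : κ → ℝ) := by
        rw [← map_smul]
        exact smul_le_smul_of_nonneg_left (hHG _ hunit) hα.le
      _ = (c * α) • 1 := by rw [smul_smul, mul_comm]

lemma Matrix.mulVec_le_smul_one_of_mem_upperBounds {ι n : Type*} [Fintype n] {H : Matrix ι n ℝ}
    {W : Set (n → ℝ)} {wbar : ℝ} (hwbar : wbar ∈ upperBounds {s | ∃ w ∈ W, ∃ j, (H *ᵥ w) j = s})
    {w : n → ℝ} (hw : w ∈ W) : H *ᵥ w ≤ wbar • 1 := fun j => by
  simpa using hwbar ⟨w, hw, j, rfl⟩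

lemma affine_recurrence_eq {𝕜 : Type*} [Field 𝕜] {a : ℕ → 𝕜} {l b : 𝕜} (hl : l ≠ 1)
    (ha : ∀ t, a (t + 1) = l * a t + b) (t : ℕ) :
    a t = l ^ t * a 0 + b * (1 - l ^ t) / (1 - l) := by
  have hl' : 1 - l ≠ 0 := sub_ne_zero.mpr hl.symm
  induction t with
  | zero => simp
  | succ t ih =>
    rw [ha, ih]
    field_simp
    ring

theorem stmt19_general {n m p nx : ℕ}
    (A : (Fin p → ℝ) → Matrix (Fin n) (Fin n) ℝ)
    (B : (Fin p → ℝ) → Matrix (Fin n) (Fin m) ℝ)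
    (K : Matrix (Fin m) (Fin n) ℝ)
    (Hx : Matrix (Fin nx) (Fin n) ℝ)
    (Θ : Set (Fin p → ℝ)) (W : Set (Fin n → ℝ))
    (lc : ℝ) (hlc1 : lc < 1)
    (hcontr : ∀ θ ∈ Θ, ∀ x : Fin n → ℝ, Hx.mulVec x ≤ 1 →
      Hx.mulVec ((A θ + B θ * K).mulVec x) ≤ lc • (1 : Fin nx → ℝ))
    (wbars : ℝ)
    (hwbars : IsGreatest {s | ∃ w ∈ W, ∃ j, Hx.mulVec w j = s} wbars) :
    (∀ α : ℝ, 0 ≤ α → ∀ x : Fin n → ℝ,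
        Hx.mulVec x ≤ α • (1 : Fin nx → ℝ) → ∀ θ ∈ Θ, ∀ w ∈ W,
          Hx.mulVec ((A θ + B θ * K).mulVec x + w) ≤
            (lc * α + wbars) • (1 : Fin nx → ℝ)) ∧
      ∀ a : ℕ → ℝ, (∀ t, a (t + 1) = lc * a t + wbars) →
        ∀ t, a t ≤ lc ^ t * a 0 + wbars * (1 - lc ^ t) / (1 - lc) := by
  refine ⟨fun α hα x hx θ hθ w hw => ?_, fun a ha t => (affine_recurrence_eq hlc1.ne ha t).le⟩
  have hnominal : Hx *ᵥ ((A θ + B θ * K) *ᵥ x) ≤ (lc * α) • 1 :=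
    LinearMap.le_smul_one_of_le_smul_one Hx.mulVecLin
      (Hx.mulVecLin ∘ₗ (A θ + B θ * K).mulVecLin) (hcontr θ hθ) hα hx
  rw [mulVec_add, add_smul]
  exact add_le_add hnominal (mulVec_le_smul_one_of_mem_upperBounds hwbars.2 hw)

/-- one-step contraction of the tube scaling under the disturbed
closed loop, and the resulting geometric bound on the scalings. -/
theorem stmt19 {n m p nx : ℕ}
    (A : (Fin p → ℝ) → Matrix (Fin n) (Fin n) ℝ)
    (B : (Fin p → ℝ) → Matrix (Fin n) (Fin m) ℝ)
    (K : Matrix (Fin m) (Fin n) ℝ)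
    (Hx : Matrix (Fin nx) (Fin n) ℝ)
    (Θ : Set (Fin p → ℝ)) (W : Set (Fin n → ℝ))
    (lc : ℝ) (hlc0 : 0 ≤ lc) (hlc1 : lc < 1)
    (hcontr : ∀ θ ∈ Θ, ∀ x : Fin n → ℝ, Hx.mulVec x ≤ 1 →
      Hx.mulVec ((A θ + B θ * K).mulVec x) ≤ lc • (1 : Fin nx → ℝ))
    (wbars : ℝ)
    (hwbars : IsGreatest {s | ∃ w ∈ W, ∃ j, Hx.mulVec w j = s} wbars) :
    (∀ α : ℝ, 0 ≤ α → ∀ x : Fin n → ℝ,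
        Hx.mulVec x ≤ α • (1 : Fin nx → ℝ) → ∀ θ ∈ Θ, ∀ w ∈ W,
          Hx.mulVec ((A θ + B θ * K).mulVec x + w) ≤
            (lc * α + wbars) • (1 : Fin nx → ℝ)) ∧
      ∀ a : ℕ → ℝ, (∀ t, a (t + 1) = lc * a t + wbars) →
        ∀ t, a t ≤ lc ^ t * a 0 + wbars * (1 - lc ^ t) / (1 - lc) :=
  stmt19_general A B K Hx Θ W lc hlc1 hcontr wbars hwbars
end
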